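/- The subset C = π({w ∈ Σ : w₂ ∈ {2,3} and w_k ∈ {0,1} for all k ≥ 3}) of K is homeomorphic to the circle S¹. -/

import Mathlib

open Classical

/-- The space `Σ` of infinite words over the alphabet `X = {0,1,2,3,4,5} = ℤ/6`
(indexed from `0`: the letter `w₁` of the paper is `w 0`). -/
abbrev Word := ℕ → ZMod 6

/-- The metric `δ_r` on a word space: `δ_r(w,v) = r^ℓ` where `ℓ ≥ 1` is the first
(1-indexed) position at which `w` and `v` differ, and `δ_r(w,w) = 0`. -/
noncomputable def wordDist {X : Type*} (r : ℝ) (w v : ℕ → X) : ℝ :=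
  if h : w = v then 0
  else r ^ (Nat.find (Function.ne_iff.mp h) + 1)

/-- Prepending a letter to an infinite word: `σ_i(w) = iw`. -/
def prepend {X : Type*} (i : X) (w : ℕ → X) : ℕ → X
  | 0 => i
  | n + 1 => w n

/-- `α_k = u₁ + ⋯ + u_k` in `ℤ/6` (the sum of the first `k` letters of `u`). -/
def alphaSum (u : Word) (k : ℕ) : ZMod 6 := ∑ j ∈ Finset.range k, u j

/-- The map `f : Σ → Σ`, `f(u) = v` with `v₁ = u₁` and
`v_m = (−1)^{α_{m−1}} u_m + α_{m−1}` (mod 6); here `(−1)^α` is `+1` when `α ∈ ℤ/6` is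
even and `−1` when `α` is odd.  (In 0-indexed form, position `m` corresponds to index
`m−1`, and `α_0 = 0` is even, so the case `v₁ = u₁` is subsumed.) -/
noncomputable def fMap (u : Word) : Word := fun n =>
  (if Even (alphaSum u n) then u n else -(u n)) + alphaSum u n

/-- The generating relation of `∼`: `u` and `w` are of the forms `x i α v` and
`x j α v`, where `x` is a finite word (of length `ℓ`, occupying indices `< ℓ`),
`j = i + 1` (mod 6), `α ∈ {3,4}` if `i` is odd and `α ∈ {1,2}` if `i` is even, and
`v ∈ {0,5}^ℕ`. -/
def Tilde (u w : Word) : Prop :=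
  ∃ ℓ : ℕ, (∀ m < ℓ, u m = w m) ∧ w ℓ = u ℓ + 1 ∧ (∀ m > ℓ, u m = w m) ∧
    ((¬ Even (u ℓ) ∧ (u (ℓ + 1) = 3 ∨ u (ℓ + 1) = 4)) ∨
      (Even (u ℓ) ∧ (u (ℓ + 1) = 1 ∨ u (ℓ + 1) = 2))) ∧
    (∀ m, ℓ + 2 ≤ m → u m = 0 ∨ u m = 5)

/-- The equivalence relation `∼` on `Σ` generated by `Tilde`, as a setoid. -/
def simSetoid : Setoid Word := ⟨Relation.EqvGen Tilde, Relation.EqvGen.is_equivalence _⟩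

/-- The Strichartz hexacarpet `K = Σ/∼` (with the quotient topology, `ℤ/6` being
discrete and `Σ` carrying the product topology). -/
def Hexacarpet := Quotient simSetoid

instance : TopologicalSpace Hexacarpet :=
  instTopologicalSpaceQuotient

/-- The quotient map `π : Σ → K`. -/
def piK : Word → Hexacarpet := Quotient.mk simSetoid


/-!
A word of the set is `i α b₂ b₃ ⋯` with `i ∈ ℤ/6`, `α ∈ {2, 3}` and binary `b_k`. The parities
of the partial sums `α₂, α₃, …` of its letters are the binary digits of a number `x ∈ [0, 1]`
(a Gray-code decoding), and the word is sent to the point `exp (iπ (i - x) / 3)`, on the sixth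
of the circle between `exp (iπ i / 3)` and `exp (iπ (i - 1) / 3)`. This map is continuous and
onto. Two words have the same image exactly when they are `∼`-equivalent: inside one arc
equal images come from the two binary expansions of a dyadic number, which are the words
`x 0 1 0 0 ⋯ ∼ x 1 1 0 0 ⋯` (with `α = 2, 3` playing the roles of `0, 1`), and the endpoints of
neighbouring arcs are glued by the generating relations at the first letter. The set of words
is closed and saturated for `∼`, so closed subsets of the circle pull back to closed subsets
of `C`; a continuous bijection from the compact space `C` to the circle is a homeomorphism.
-/

namespace Real

theorem ofDigits_lt_ofDigits {b : ℕ} {d d' : ℕ → Fin b} (hle : ∀ k, d k ≤ d' k) {k : ℕ}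
    (hlt : d k < d' k) : ofDigits d < ofDigits d' := by
  have hterm : ∀ k, ofDigitsTerm d k ≤ ofDigitsTerm d' k := fun k => by
    unfold ofDigitsTerm
    gcongr
    exact hle k
  refine Summable.tsum_lt_tsum hterm ?_ summable_ofDigitsTerm summable_ofDigitsTerm (i := k)
  have hb : (0 : ℝ) < b := by exact_mod_cast Fin.pos (d k)
  exact mul_lt_mul_of_pos_right (by exact_mod_cast hlt) (by positivity)

theorem ofDigits_const_fin_two (c : Fin 2) : ofDigits (fun _ => c) = c := by
  fin_cases c
  · simp [ofDigits, ofDigitsTerm]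
  · simpa using ofDigits_const_last_eq_one 1

theorem eq_const_of_ofDigits_eq {e : ℕ → Fin 2} {c : Fin 2} (h : ofDigits e = c) :
    e = fun _ => c := by
  by_contra hne
  obtain ⟨k, hk⟩ := Function.ne_iff.mp hne
  rw [← ofDigits_const_fin_two c] at h
  obtain rfl | rfl : c = 0 ∨ c = 1 := by omega
  · exact (ofDigits_lt_ofDigits (fun k => Fin.zero_le (e k)) (Fin.pos_iff_ne_zero.mpr hk)).ne' h
  · exact (ofDigits_lt_ofDigits (fun k => Fin.le_last (e k)) ((Fin.le_last _).lt_of_ne hk)).ne h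

theorem sum_ofDigitsTerm_congr {b : ℕ} {d d' : ℕ → Fin b} {N : ℕ} (h : ∀ k < N, d k = d' k) :
    ∑ i ∈ Finset.range N, ofDigitsTerm d i = ∑ i ∈ Finset.range N, ofDigitsTerm d' i :=
  Finset.sum_congr rfl fun i hi => by rw [ofDigitsTerm, ofDigitsTerm, h i (Finset.mem_range.mp hi)]

theorem ofDigits_eq_sum_add_of_const_tail {d : ℕ → Fin 2} {N : ℕ} {c : Fin 2}
    (h : ∀ k, N < k → d k = c) :
    ofDigits d = ∑ i ∈ Finset.range N, ofDigitsTerm d i + (d N + c) * ((2 : ℝ) ^ (N + 1))⁻¹ := by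
  have htail : (fun i => d (i + (N + 1))) = fun _ => c := funext fun i => h _ (by omega)
  rw [ofDigits_eq_sum_add_ofDigits d (N + 1), htail, ofDigits_const_fin_two,
    Finset.sum_range_succ, ofDigitsTerm]
  push_cast
  ring

/-- The two binary expansions `x a b b b ⋯` and `x b a a a ⋯` (`a ≠ b`, `x` of length `N`) of a
dyadic rational. -/
def IsDyadicPair (d d' : ℕ → Fin 2) (N : ℕ) : Prop :=
  (∀ k < N, d k = d' k) ∧ d N ≠ d' N ∧ ∀ k, N < k → d k = d' N ∧ d' k = d N

theorem IsDyadicPair.symm {d d' : ℕ → Fin 2} {N : ℕ} (h : IsDyadicPair d d' N) :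
    IsDyadicPair d' d N :=
  ⟨fun k hk => (h.1 k hk).symm, h.2.1.symm, fun k hk => (h.2.2 k hk).symm⟩

theorem isDyadicPair_of_ofDigits_eq {d d' : ℕ → Fin 2} {N : ℕ} (hpre : ∀ k < N, d k = d' k)
    (hlt : d N < d' N) (h : ofDigits d = ofDigits d') : IsDyadicPair d d' N := by
  obtain ⟨hdN, hd'N⟩ : d N = 0 ∧ d' N = 1 := by omega
  rw [ofDigits_eq_sum_add_ofDigits d (N + 1), ofDigits_eq_sum_add_ofDigits d' (N + 1),
    Finset.sum_range_succ, Finset.sum_range_succ, sum_ofDigitsTerm_congr hpre, ofDigitsTerm,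
    ofDigitsTerm, hdN, hd'N] at h
  have hx := ofDigits_le_one fun i => d (i + (N + 1))
  have hx' := ofDigits_nonneg fun i => d' (i + (N + 1))
  have h2 : (0 : ℝ) < ((2 : ℕ) : ℝ) ^ (N + 1) := by positivity
  field_simp at h
  simp only [Fin.val_zero, Fin.val_one, Nat.cast_zero, Nat.cast_one] at h
  have hx1 : ofDigits (fun i => d (i + (N + 1))) = ((1 : Fin 2) : ℕ) := by simp; linarith
  have hx'0 : ofDigits (fun i => d' (i + (N + 1))) = ((0 : Fin 2) : ℕ) := by simp; linarith
  refine ⟨hpre, hlt.ne, fun k hk => ?_⟩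
  obtain ⟨j, rfl⟩ : ∃ j, k = j + (N + 1) := ⟨k - (N + 1), by omega⟩
  rw [hdN, hd'N]
  exact ⟨congrFun (eq_const_of_ofDigits_eq hx1) j, congrFun (eq_const_of_ofDigits_eq hx'0) j⟩

theorem ofDigits_eq_ofDigits_iff {d d' : ℕ → Fin 2} :
    ofDigits d = ofDigits d' ↔ d = d' ∨ ∃ N, IsDyadicPair d d' N := by
  constructor
  · refine fun h => or_iff_not_imp_left.mpr fun hne => ?_
    have hex : ∃ k, d k ≠ d' k := Function.ne_iff.mp hne
    have hpre : ∀ k < Nat.find hex, d k = d' k := fun k hk => not_not.mp (Nat.find_min hex hk)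
    refine ⟨Nat.find hex, ?_⟩
    rcases (Nat.find_spec hex).lt_or_gt with hlt | hlt
    · exact isDyadicPair_of_ofDigits_eq hpre hlt h
    · exact (isDyadicPair_of_ofDigits_eq (fun k hk => (hpre k hk).symm) hlt h.symm).symm
  · rintro (rfl | ⟨N, hpre, -, htail⟩)
    · rfl
    rw [ofDigits_eq_sum_add_of_const_tail fun k hk => (htail k hk).1,
      ofDigits_eq_sum_add_of_const_tail fun k hk => (htail k hk).2, sum_ofDigitsTerm_congr hpre,
      add_comm (d N : ℝ)]

end Real

open Set in
theorem Quotient.nonempty_homeomorph_image_mk {X Y : Type*} [TopologicalSpace X] [CompactSpace X]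
    [TopologicalSpace Y] [T2Space Y] {r : Setoid X} {S : Set X} (hS : IsClosed S)
    (hsat : ∀ u w, r u w → u ∈ S → w ∈ S) {f : X → Y} (hf : Continuous f)
    (hker : ∀ u ∈ S, ∀ w ∈ S, r u w ↔ f u = f w) (hsurj : SurjOn f S univ) :
    Nonempty ((Quotient.mk r '' S) ≃ₜ Y) := by
  have hrep (c : Quotient.mk r '' S) : ∃ u ∈ S, Quotient.mk r u = c := c.2
  choose rep hrepS hrep using hrep
  have hrep_rel {c : Quotient.mk r '' S} {u : X} (hu : u ∈ S) (hc : Quotient.mk r u = c) :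
      f (rep c) = f u :=
    (hker _ (hrepS c) u hu).mp (Quotient.exact ((hrep c).trans hc.symm))
  have hsat_image (F : Set Y) :
      Quotient.mk r ⁻¹' (Quotient.mk r '' (S ∩ f ⁻¹' F)) = S ∩ f ⁻¹' F := by
    refine Subset.antisymm ?_ (subset_preimage_image _ _)
    rintro v ⟨u, ⟨huS, huF⟩, huv⟩
    have hr : r u v := Quotient.exact huv
    have hv := hsat u v hr huS
    exact ⟨hv, show f v ∈ F from (hker u huS v hv).mp hr ▸ huF⟩
  have hcont : Continuous fun c => f (rep c) := by
    refine continuous_iff_isClosed.mpr fun F hF => ?_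
    have hclosed : IsClosed (Quotient.mk r '' (S ∩ f ⁻¹' F)) := by
      refine (isQuotientMap_quotient_mk' (s := r)).isClosed_preimage.mp ?_
      exact (hsat_image F).symm ▸ hS.inter (hF.preimage hf)
    convert hclosed.preimage continuous_subtype_val using 1
    ext c
    constructor
    · intro hc
      exact ⟨rep c, ⟨hrepS c, hc⟩, hrep c⟩
    · rintro ⟨u, ⟨huS, huF⟩, hc⟩
      exact show f (rep c) ∈ F from (hrep_rel huS hc).symm ▸ huF
  have hbij : Function.Bijective fun c => f (rep c) := by
    refine ⟨fun c c' h => Subtype.ext ?_, fun y => ?_⟩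
    · rw [← hrep c, ← hrep c']
      exact Quotient.sound ((hker _ (hrepS c) _ (hrepS c')).mpr h)
    · obtain ⟨u, hu, rfl⟩ := hsurj (mem_univ y)
      exact ⟨⟨Quotient.mk r u, u, hu, rfl⟩, hrep_rel hu rfl⟩
  have : CompactSpace (Quotient.mk r '' S) :=
    isCompact_iff_compactSpace.mp (hS.isCompact.image continuous_quot_mk)
  exact ⟨hcont.homeoOfEquivCompactToT2 (f := Equiv.ofBijective _ hbij)⟩

namespace Hexacarpet

open Real Set

noncomputable def arcPoint (i : ZMod 6) (x : ℝ) : Circle :=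
  ZMod.toCircle i * Circle.exp (-(π / 3 * x))

theorem arcPoint_eq_exp (i : ZMod 6) (x : ℝ) :
    arcPoint i x = Circle.exp (π / 3 * (i.val - x)) := by
  rw [arcPoint, ZMod.toCircle_eq_circleExp, ← Circle.exp_add]
  congr 1
  push_cast
  ring

theorem arcPoint_add_one_one (i : ZMod 6) : arcPoint (i + 1) 1 = arcPoint i 0 := by
  have h1 : ZMod.toCircle (1 : ZMod 6) = Circle.exp (π / 3 * 1) := by
    rw [ZMod.toCircle_eq_circleExp, show (1 : ZMod 6).val = 1 from rfl]
    congr 1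
    push_cast
    ring
  rw [arcPoint, arcPoint, AddChar.map_add_eq_mul, h1, mul_assoc, ← Circle.exp_add]
  simp

theorem arcPoint_eq_arcPoint_iff {i j : ZMod 6} {x y : ℝ} (hx : x ∈ Icc 0 1) (hy : y ∈ Icc 0 1) :
    arcPoint i x = arcPoint j y ↔
      (i = j ∧ x = y) ∨ (j = i + 1 ∧ x = 0 ∧ y = 1) ∨ (i = j + 1 ∧ x = 1 ∧ y = 0) := by
  refine ⟨fun h => ?_, ?_⟩
  · rw [arcPoint_eq_exp, arcPoint_eq_exp, Circle.exp_eq_exp] at h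
    obtain ⟨m, hm⟩ := h
    set n : ℤ := i.val - j.val - 6 * m with hn
    have hxy : (n : ℝ) = x - y := by
      rw [hn]
      push_cast
      nlinarith [pi_pos]
    have hij : i = j + n := by
      rw [hn]
      push_cast
      rw [ZMod.natCast_zmod_val, ZMod.natCast_zmod_val, show (6 : ZMod 6) = 0 from rfl]
      ring
    have hlo : -1 ≤ n := by exact_mod_cast (show (-1 : ℝ) ≤ n by rw [hxy]; linarith [hx.1, hy.2])
    have hhi : n ≤ 1 := by exact_mod_cast (show (n : ℝ) ≤ 1 by rw [hxy]; linarith [hx.2, hy.1])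
    obtain ⟨hx0, hx1⟩ := hx
    obtain ⟨hy0, hy1⟩ := hy
    interval_cases n <;> push_cast at hxy hij
    · exact .inr (.inl ⟨by rw [hij, neg_add_cancel_right], by linarith, by linarith⟩)
    · exact .inl ⟨by simpa using hij, by linarith⟩
    · exact .inr (.inr ⟨hij, by linarith, by linarith⟩)
  · rintro (⟨rfl, rfl⟩ | ⟨rfl, rfl, rfl⟩ | ⟨rfl, rfl, rfl⟩)
    · rfl
    · exact (arcPoint_add_one_one i).symm
    · exact arcPoint_add_one_one j

theorem exists_arcPoint_eq (z : Circle) : ∃ i x, x ∈ Icc (0 : ℝ) 1 ∧ arcPoint i x = z := by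
  obtain ⟨t, rfl⟩ := Circle.exp_surjective z
  set n : ℤ := ⌈3 / π * t⌉
  refine ⟨n, n - 3 / π * t, ⟨?_, ?_⟩, ?_⟩
  · linarith [Int.le_ceil (3 / π * t)]
  · linarith [Int.ceil_lt_add_one (3 / π * t)]
  rw [arcPoint_eq_exp, Circle.exp_eq_exp]
  refine ⟨-(n / 6), ?_⟩
  have hval : ((n : ZMod 6).val : ℝ) = n - 6 * (n / 6 : ℤ) := by
    have := ZMod.val_intCast (n := 6) n
    rw [Int.emod_def] at this
    exact_mod_cast this
  rw [hval]
  field_simp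
  push_cast
  ring

def circleWords : Set Word :=
  {w | (w 1 = 2 ∨ w 1 = 3) ∧ ∀ k, 2 ≤ k → (w k = 0 ∨ w k = 1)}

def IsCircleLetter : ℕ → ZMod 6 → Prop
  | 0, _ => True
  | 1, a => a = 2 ∨ a = 3
  | _ + 2, a => a = 0 ∨ a = 1

theorem mem_circleWords_iff {w : Word} : w ∈ circleWords ↔ ∀ k, IsCircleLetter k (w k) := by
  refine ⟨fun hw k => ?_, fun hw => ⟨hw 1, fun k hk => ?_⟩⟩
  · rcases k with _ | _ | k
    exacts [trivial, hw.1, hw.2 _ (by omega)]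
  · obtain ⟨k, rfl⟩ := Nat.exists_eq_add_of_le' hk
    exact hw (k + 2)

theorem isClosed_circleWords : IsClosed circleWords := by
  have h : circleWords = ⋂ k, (fun w : Word => w k) ⁻¹' {a | IsCircleLetter k a} := by
    ext w
    simp [mem_circleWords_iff]
  rw [h]
  exact isClosed_iInter fun k => (isClosed_discrete _).preimage (continuous_apply k)

-- `Even` on `ZMod 6` is only classically decidable here; `decide` can evaluate this hom instead.
def letterParity : ZMod 6 →+ Fin 2 :=
  AddMonoidHom.mk' (fun a => ⟨a.val % 2, Nat.mod_lt _ two_pos⟩) (by decide)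

theorem letterParity_one : letterParity 1 = 1 := rfl

theorem even_iff_letterParity (a : ZMod 6) : Even a ↔ letterParity a = 0 := by
  constructor
  · rintro ⟨r, rfl⟩
    rw [map_add]
    generalize letterParity r = x
    revert x
    decide
  · have key : ∀ a : ZMod 6, letterParity a = 0 → ∃ r, a = r + r := by decide
    exact key a

def GluingCondition (i α : ZMod 6) : Prop :=
  (¬ Even i ∧ (α = 3 ∨ α = 4)) ∨ (Even i ∧ (α = 1 ∨ α = 2))

section Letters

variable {k : ℕ} {a b : ZMod 6}

theorem IsCircleLetter.eq_of_letterParity_eq (hk : k ≠ 0) (ha : IsCircleLetter k a)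
    (hb : IsCircleLetter k b) (h : letterParity a = letterParity b) : a = b := by
  rcases k with _ | _ | k
  · contradiction
  all_goals simp only [IsCircleLetter] at ha hb; revert a b; decide

theorem IsCircleLetter.eq_natCast_letterParity (ha : IsCircleLetter (k + 2) a) :
    a = ((letterParity a : ℕ) : ZMod 6) := by
  simp only [IsCircleLetter] at ha
  revert a
  decide

theorem IsCircleLetter.eq_zero_of_mem_zero_five (ha : IsCircleLetter (k + 2) a)
    (h : a = 0 ∨ a = 5) : a = 0 := by
  simp only [IsCircleLetter] at ha
  revert a
  decide

theorem IsCircleLetter.add_one_iff (hk : k ≠ 0) (ha : letterParity a = 0) :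
    IsCircleLetter k (a + 1) ↔ IsCircleLetter k a := by
  rcases k with _ | _ | k
  · contradiction
  all_goals simp only [IsCircleLetter]; revert a; decide

theorem IsCircleLetter.adjacent (hk : k ≠ 0) (ha : IsCircleLetter k a) (hb : IsCircleLetter k b)
    (h : letterParity a ≠ letterParity b) :
    (b = a + 1 ∧ letterParity a = 0) ∨ (a = b + 1 ∧ letterParity b = 0) := by
  rcases k with _ | _ | k
  · contradiction
  all_goals simp only [IsCircleLetter] at ha hb; revert a b; decide

theorem gluingCondition_iff_of_isCircleLetter_one (hb : IsCircleLetter 1 b) :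
    GluingCondition a b ↔ letterParity a + letterParity b = 0 := by
  simp only [GluingCondition, even_iff_letterParity, IsCircleLetter] at *
  revert a b
  decide

theorem GluingCondition.letterParity_eq_zero_and_eq_one (h : GluingCondition a b)
    (hb : IsCircleLetter (k + 2) b) : letterParity a = 0 ∧ b = 1 := by
  simp only [GluingCondition, even_iff_letterParity, IsCircleLetter] at *
  revert a b
  decide

end Letters

def prefixParity (w : Word) (k : ℕ) : Fin 2 := letterParity (alphaSum w (k + 1))

theorem prefixParity_zero (w : Word) : prefixParity w 0 = letterParity (w 0) := by
  simp [prefixParity, alphaSum]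

theorem prefixParity_succ (w : Word) (k : ℕ) :
    prefixParity w (k + 1) = prefixParity w k + letterParity (w (k + 1)) := by
  simp only [prefixParity, alphaSum, Finset.sum_range_succ _ (k + 1), map_add]

theorem letterParity_eq_prefixParity_sub (w : Word) (k : ℕ) :
    letterParity (w (k + 1)) = prefixParity w (k + 1) - prefixParity w k := by
  rw [prefixParity_succ, add_sub_cancel_left]

theorem letter_eq_natCast_prefixParity_sub {w : Word} (hw : w ∈ circleWords) (k : ℕ) :
    w (k + 2) = (((prefixParity w (k + 2) - prefixParity w (k + 1) : Fin 2) : ℕ) : ZMod 6) := by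
  rw [← letterParity_eq_prefixParity_sub]
  exact (mem_circleWords_iff.mp hw (k + 2)).eq_natCast_letterParity

theorem prefixParity_eq_of_forall_lt_eq_zero {u : Word} {N : ℕ} (h : ∀ m, N < m → u m = 0)
    {k : ℕ} (hk : N ≤ k) : prefixParity u k = prefixParity u N := by
  induction k, hk using Nat.le_induction with
  | base => rfl
  | succ k hk ih => rw [prefixParity_succ, h (k + 1) (by omega), map_zero, add_zero, ih]

def binaryDigits (w : Word) (k : ℕ) : Fin 2 := prefixParity w (k + 1)

noncomputable def circleMap (w : Word) : Circle :=
  arcPoint (w 0) (ofDigits (binaryDigits w))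

theorem continuous_circleMap : Continuous circleMap := by
  have hdigits : Continuous fun w : Word => ofDigits (binaryDigits w) :=
    continuous_ofDigits.comp <| continuous_pi fun k => (continuous_of_discreteTopology
      (f := letterParity)).comp (continuous_finsetSum _ fun j _ => continuous_apply j)
  have hi : Continuous fun w : Word => ZMod.toCircle (w 0) :=
    (continuous_of_discreteTopology (f := (ZMod.toCircle : ZMod 6 → Circle))).comp
      (continuous_apply 0)
  unfold circleMap arcPoint
  fun_prop

theorem tilde_of_letters {u w : Word} {ℓ : ℕ} (hne : ∀ m, m ≠ ℓ → u m = w m)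
    (hℓ : w ℓ = u ℓ + 1) (hcond : GluingCondition (u ℓ) (u (ℓ + 1)))
    (htail : ∀ m, ℓ + 2 ≤ m → u m = 0) : Tilde u w :=
  ⟨ℓ, fun m hm => hne m hm.ne, hℓ, fun m hm => hne m hm.ne', hcond,
    fun m hm => .inl (htail m hm)⟩

theorem alphaSum_of_switch {u w : Word} {ℓ : ℕ} (hne : ∀ m, m ≠ ℓ → u m = w m)
    (hℓ : w ℓ = u ℓ + 1) (n : ℕ) :
    alphaSum w n = alphaSum u n + if ℓ < n then 1 else 0 := by
  induction n with
  | zero => simp [alphaSum]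
  | succ n ih =>
    simp only [alphaSum, Finset.sum_range_succ] at ih ⊢
    rcases lt_trichotomy n ℓ with h | rfl | h
    · rw [ih, hne n h.ne, if_neg (by omega), if_neg (by omega)]
      ring
    · rw [ih, hℓ, if_neg (lt_irrefl _), if_pos (by omega)]
      ring
    · rw [ih, hne n h.ne', if_pos h, if_pos (by omega)]
      ring

theorem prefixParity_of_switch {u w : Word} {ℓ : ℕ} (hne : ∀ m, m ≠ ℓ → u m = w m)
    (hℓ : w ℓ = u ℓ + 1) (k : ℕ) :
    prefixParity w k = prefixParity u k + if ℓ ≤ k then 1 else 0 := by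
  simp only [prefixParity, alphaSum_of_switch hne hℓ, map_add, Nat.lt_succ_iff]
  split_ifs <;> simp [letterParity_one]

theorem circleMap_eq_of_switch_zero {u w : Word} (hne : ∀ m, m ≠ 0 → u m = w m)
    (h0 : w 0 = u 0 + 1) (h01 : letterParity (u 0) + letterParity (u 1) = 0)
    (hzero : ∀ m, 1 < m → u m = 0) : circleMap u = circleMap w := by
  have hdu : binaryDigits u = fun _ => 0 := funext fun k => by
    rw [binaryDigits, prefixParity_eq_of_forall_lt_eq_zero hzero (by omega), prefixParity_succ,
      prefixParity_zero, h01]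
  have hdw : binaryDigits w = fun _ => 1 := funext fun k => by
    rw [binaryDigits, prefixParity_of_switch hne h0, if_pos (by omega),
      show prefixParity u (k + 1) = 0 from congrFun hdu k, zero_add]
  rw [circleMap, circleMap, hdu, hdw, h0, ofDigits_const_fin_two, ofDigits_const_fin_two]
  simpa using (arcPoint_add_one_one (u 0)).symm

theorem circleMap_eq_of_switch_succ {u w : Word} {n : ℕ} (hne : ∀ m, m ≠ n + 1 → u m = w m)
    (hn : w (n + 1) = u (n + 1) + 1) (hone : u (n + 2) = 1) (hzero : ∀ m, n + 2 < m → u m = 0) :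
    circleMap u = circleMap w := by
  have hpar := prefixParity_of_switch hne hn
  have htail : ∀ k, n + 1 < k → prefixParity u k = prefixParity u (n + 1) + 1 := fun k hk => by
    rw [prefixParity_eq_of_forall_lt_eq_zero hzero hk, prefixParity_succ, hone, letterParity_one]
  have hflip : ∀ q : Fin 2, q ≠ q + 1 ∧ q + 1 + 1 = q := by decide
  have hpair : IsDyadicPair (binaryDigits u) (binaryDigits w) n := by
    simp only [IsDyadicPair, binaryDigits, hpar]
    refine ⟨fun k hk => by rw [if_neg (by omega), add_zero], ?_, fun k hk => ?_⟩
    · rw [if_pos le_rfl]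
      exact (hflip _).1
    · rw [if_pos le_rfl, if_pos (by omega), htail (k + 1) (by omega)]
      exact ⟨rfl, (hflip _).2⟩
  rw [circleMap, circleMap, ← hne 0 (by omega), ofDigits_eq_ofDigits_iff.mpr (.inr ⟨n, hpair⟩)]

theorem Tilde.mem_circleWords_and_circleMap_eq {u w : Word} (h : Tilde u w)
    (hmem : u ∈ circleWords ∨ w ∈ circleWords) :
    u ∈ circleWords ∧ w ∈ circleWords ∧ circleMap u = circleMap w := by
  obtain ⟨ℓ, hlt, hℓ, hgt, hcond, htail⟩ := h
  have hne : ∀ m, m ≠ ℓ → u m = w m := fun m hm => hm.lt_or_gt.elim (hlt m) (hgt m)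
  have hletter : ∀ m, m ≠ ℓ → IsCircleLetter m (u m) := by
    rcases hmem with hu | hw
    · exact fun m _ => mem_circleWords_iff.mp hu m
    · exact fun m hm => hne m hm ▸ mem_circleWords_iff.mp hw m
  have hzero : ∀ m, ℓ + 1 < m → u m = 0 := fun m hm => by
    obtain ⟨k, rfl⟩ : ∃ k, m = k + 2 := ⟨m - 2, by omega⟩
    exact (hletter _ (by omega)).eq_zero_of_mem_zero_five (htail _ hm)
  have hmem_of (hu : IsCircleLetter ℓ (u ℓ)) (hw : IsCircleLetter ℓ (w ℓ)) :
      u ∈ circleWords ∧ w ∈ circleWords := by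
    refine ⟨mem_circleWords_iff.mpr fun m => ?_, mem_circleWords_iff.mpr fun m => ?_⟩ <;>
      rcases eq_or_ne m ℓ with rfl | hm
    exacts [hu, hletter m hm, hw, hne m hm ▸ hletter m hm]
  rcases ℓ with _ | n
  · obtain ⟨hu, hw⟩ := hmem_of trivial trivial
    refine ⟨hu, hw, circleMap_eq_of_switch_zero hne hℓ ?_ hzero⟩
    exact (gluingCondition_iff_of_isCircleLetter_one (hletter 1 one_ne_zero)).mp hcond
  · obtain ⟨hun, hone⟩ :=
      GluingCondition.letterParity_eq_zero_and_eq_one hcond (hletter (n + 2) (by omega))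
    have hadd := IsCircleLetter.add_one_iff n.succ_ne_zero hun
    have hℓletter : IsCircleLetter (n + 1) (u (n + 1)) := by
      rcases hmem with hu | hw
      · exact mem_circleWords_iff.mp hu _
      · exact hadd.mp (hℓ ▸ mem_circleWords_iff.mp hw _)
    obtain ⟨hu, hw⟩ := hmem_of hℓletter (hℓ ▸ hadd.mpr hℓletter)
    exact ⟨hu, hw, circleMap_eq_of_switch_succ hne hℓ hone hzero⟩

theorem mem_circleWords_iff_and_circleMap_eq_of_eqvGen {u w : Word}
    (h : Relation.EqvGen Tilde u w) :
    (u ∈ circleWords ↔ w ∈ circleWords) ∧ (u ∈ circleWords → circleMap u = circleMap w) := by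
  induction h with
  | rel u w h =>
    exact ⟨⟨fun hu => (Tilde.mem_circleWords_and_circleMap_eq h (.inl hu)).2.1,
      fun hw => (Tilde.mem_circleWords_and_circleMap_eq h (.inr hw)).1⟩,
      fun hu => (Tilde.mem_circleWords_and_circleMap_eq h (.inl hu)).2.2⟩
  | refl => exact ⟨Iff.rfl, fun _ => rfl⟩
  | symm _ _ _ ih => exact ⟨ih.1.symm, fun hw => (ih.2 (ih.1.mpr hw)).symm⟩
  | trans _ _ _ _ _ ih₁ ih₂ =>
    exact ⟨ih₁.1.trans ih₂.1, fun hu => (ih₁.2 hu).trans (ih₂.2 (ih₁.1.mp hu))⟩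

theorem letter_eq_of_letterParity_eq {u w : Word} (hu : u ∈ circleWords) (hw : w ∈ circleWords)
    {k : ℕ} (hk : k ≠ 0) (h : letterParity (u k) = letterParity (w k)) : u k = w k :=
  (mem_circleWords_iff.mp hu k).eq_of_letterParity_eq hk (mem_circleWords_iff.mp hw k) h

theorem prefixParity_eq_of_binaryDigits_eq {u w : Word} (h0 : u 0 = w 0) {N : ℕ}
    (h : ∀ j < N, binaryDigits u j = binaryDigits w j) {k : ℕ} (hk : k ≤ N) :
    prefixParity u k = prefixParity w k := by
  rcases k with _ | k
  · rw [prefixParity_zero, prefixParity_zero, h0]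
  · exact h k (by omega)

theorem eq_of_binaryDigits_eq {u w : Word} (hu : u ∈ circleWords) (hw : w ∈ circleWords)
    (h0 : u 0 = w 0) (h : binaryDigits u = binaryDigits w) : u = w := by
  have hpar (k : ℕ) : prefixParity u k = prefixParity w k :=
    prefixParity_eq_of_binaryDigits_eq h0 (N := k) (fun j _ => congrFun h j) le_rfl
  funext m
  rcases m with _ | m
  · exact h0
  · refine letter_eq_of_letterParity_eq hu hw m.succ_ne_zero ?_
    rw [letterParity_eq_prefixParity_sub, letterParity_eq_prefixParity_sub, hpar, hpar]

theorem letters_of_isDyadicPair {u w : Word} (hu : u ∈ circleWords) (hw : w ∈ circleWords)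
    {N : ℕ} (hN : IsDyadicPair (binaryDigits u) (binaryDigits w) N) :
    u (N + 2) = 1 ∧ w (N + 2) = 1 ∧ ∀ m, N + 2 < m → u m = 0 ∧ w m = 0 := by
  simp only [IsDyadicPair, binaryDigits] at hN
  obtain ⟨-, hNe, htail⟩ := hN
  have hsub : ∀ a b : Fin 2, a ≠ b → a - b = 1 := by decide
  refine ⟨?_, ?_, fun m hm => ?_⟩
  · rw [letter_eq_natCast_prefixParity_sub hu, (htail (N + 1) (by omega)).1, hsub _ _ hNe.symm]
    rfl
  · rw [letter_eq_natCast_prefixParity_sub hw, (htail (N + 1) (by omega)).2, hsub _ _ hNe]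
    rfl
  · obtain ⟨k, rfl⟩ : ∃ k, m = k + 2 := ⟨m - 2, by omega⟩
    rw [letter_eq_natCast_prefixParity_sub hu, letter_eq_natCast_prefixParity_sub hw,
      (htail (k + 1) (by omega)).1, (htail k (by omega)).1, (htail (k + 1) (by omega)).2,
      (htail k (by omega)).2, sub_self, sub_self]
    exact ⟨rfl, rfl⟩

theorem tilde_of_isDyadicPair {u w : Word} (hu : u ∈ circleWords) (hw : w ∈ circleWords)
    (h0 : u 0 = w 0) {N : ℕ} (hN : IsDyadicPair (binaryDigits u) (binaryDigits w) N) :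
    Tilde u w ∨ Tilde w u := by
  have hpre : ∀ k ≤ N, prefixParity u k = prefixParity w k := fun k hk =>
    prefixParity_eq_of_binaryDigits_eq h0 hN.1 hk
  obtain ⟨hu1, hw1, hzero⟩ := letters_of_isDyadicPair hu hw hN
  have hne : ∀ m, m ≠ N + 1 → u m = w m := by
    intro m hm
    rcases lt_trichotomy m (N + 2) with h | rfl | h
    · rcases m with _ | m
      · exact h0
      refine letter_eq_of_letterParity_eq hu hw m.succ_ne_zero ?_
      rw [letterParity_eq_prefixParity_sub, letterParity_eq_prefixParity_sub, hpre _ (by omega),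
        hpre _ (by omega)]
    · rw [hu1, hw1]
    · rw [(hzero m h).1, (hzero m h).2]
  have hdiff : letterParity (u (N + 1)) ≠ letterParity (w (N + 1)) := by
    rw [letterParity_eq_prefixParity_sub, letterParity_eq_prefixParity_sub, hpre _ le_rfl]
    exact fun h => hN.2.1 (sub_left_injective h)
  rcases (mem_circleWords_iff.mp hu (N + 1)).adjacent N.succ_ne_zero
    (mem_circleWords_iff.mp hw (N + 1)) hdiff with ⟨hwu, hev⟩ | ⟨huw, hev⟩
  · exact .inl (tilde_of_letters hne hwu (.inr ⟨(even_iff_letterParity _).mpr hev, .inl hu1⟩)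
      fun m hm => (hzero m (by omega)).1)
  · exact .inr (tilde_of_letters (fun m hm => (hne m hm).symm) huw
      (.inr ⟨(even_iff_letterParity _).mpr hev, .inl hw1⟩) fun m hm => (hzero m (by omega)).2)

theorem tilde_of_binaryDigits_eq_zero_one {u w : Word} (hu : u ∈ circleWords)
    (hw : w ∈ circleWords) (h0 : w 0 = u 0 + 1) (hdu : binaryDigits u = fun _ => 0)
    (hdw : binaryDigits w = fun _ => 1) : Tilde u w := by
  have hpu (k : ℕ) : prefixParity u (k + 1) = 0 := congrFun hdu k
  have hpw (k : ℕ) : prefixParity w (k + 1) = 1 := congrFun hdw k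
  have hzero : ∀ m, 1 < m → u m = 0 ∧ w m = 0 := by
    intro m hm
    obtain ⟨k, rfl⟩ : ∃ k, m = k + 2 := ⟨m - 2, by omega⟩
    rw [letter_eq_natCast_prefixParity_sub hu, letter_eq_natCast_prefixParity_sub hw, hpu, hpu,
      hpw, hpw, sub_self, sub_self]
    exact ⟨rfl, rfl⟩
  have h1 : u 1 = w 1 := by
    refine letter_eq_of_letterParity_eq hu hw one_ne_zero ?_
    rw [letterParity_eq_prefixParity_sub, letterParity_eq_prefixParity_sub, prefixParity_zero,
      prefixParity_zero, hpu, hpw, h0, map_add, letterParity_one]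
    abel
  have hcond : GluingCondition (u 0) (u 1) := by
    rw [gluingCondition_iff_of_isCircleLetter_one (mem_circleWords_iff.mp hu 1), ← hpu 0,
      prefixParity_succ, prefixParity_zero]
  refine tilde_of_letters (fun m hm => ?_) h0 hcond fun m hm => (hzero m (by omega)).1
  rcases (Nat.one_le_iff_ne_zero.mpr hm).eq_or_lt with rfl | hm
  exacts [h1, (hzero m hm).1.trans (hzero m hm).2.symm]

theorem eqvGen_tilde_of_circleMap_eq {u w : Word} (hu : u ∈ circleWords) (hw : w ∈ circleWords)
    (h : circleMap u = circleMap w) : Relation.EqvGen Tilde u w := by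
  rw [circleMap, circleMap, arcPoint_eq_arcPoint_iff ⟨ofDigits_nonneg _, ofDigits_le_one _⟩
    ⟨ofDigits_nonneg _, ofDigits_le_one _⟩] at h
  rcases h with ⟨h0, hd⟩ | ⟨h0, hu0, hw1⟩ | ⟨h0, hu1, hw0⟩
  · rcases ofDigits_eq_ofDigits_iff.mp hd with hd | ⟨N, hN⟩
    · rw [eq_of_binaryDigits_eq hu hw h0 hd]
      exact .refl w
    · rcases tilde_of_isDyadicPair hu hw h0 hN with h | h
      exacts [.rel _ _ h, .symm _ _ (.rel _ _ h)]
  · exact .rel _ _ (tilde_of_binaryDigits_eq_zero_one hu hw h0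
      (eq_const_of_ofDigits_eq (by simpa using hu0)) (eq_const_of_ofDigits_eq (by simpa using hw1)))
  · refine .symm _ _ (.rel _ _ (tilde_of_binaryDigits_eq_zero_one hw hu h0 ?_ ?_))
    exacts [eq_const_of_ofDigits_eq (by simpa using hw0), eq_const_of_ofDigits_eq (by simpa using hu1)]

def ofDigitsWord (i : ZMod 6) (d : ℕ → Fin 2) : Word
  | 0 => i
  | 1 => 2 + ((d 0 - letterParity i : Fin 2) : ℕ)
  | k + 2 => ((d (k + 1) - d k : Fin 2) : ℕ)

theorem ofDigitsWord_mem_circleWords (i : ZMod 6) (d : ℕ → Fin 2) :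
    ofDigitsWord i d ∈ circleWords := by
  have h1 : ∀ b : Fin 2, (2 + (b : ℕ) : ZMod 6) = 2 ∨ (2 + (b : ℕ) : ZMod 6) = 3 := by decide
  have h2 : ∀ b : Fin 2, ((b : ℕ) : ZMod 6) = 0 ∨ ((b : ℕ) : ZMod 6) = 1 := by decide
  refine ⟨h1 _, fun k hk => ?_⟩
  obtain ⟨k, rfl⟩ : ∃ j, k = j + 2 := ⟨k - 2, by omega⟩
  exact h2 _

theorem binaryDigits_ofDigitsWord (i : ZMod 6) (d : ℕ → Fin 2) :
    binaryDigits (ofDigitsWord i d) = d := by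
  have hcast : ∀ b : Fin 2, letterParity ((b : ℕ) : ZMod 6) = b := by decide
  funext k
  induction k with
  | zero =>
    rw [binaryDigits, prefixParity_succ, prefixParity_zero]
    simp only [ofDigitsWord, map_add, hcast]
    rw [show letterParity 2 = 0 from rfl]
    abel
  | succ k ih =>
    rw [binaryDigits, prefixParity_succ, ← binaryDigits, ih]
    simp only [ofDigitsWord, hcast]
    abel

theorem surjOn_circleMap : SurjOn circleMap circleWords univ := fun z _ => by
  obtain ⟨i, x, hx, rfl⟩ := exists_arcPoint_eq z
  obtain ⟨d, -, rfl⟩ := ofDigits_SurjOn one_lt_two hx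
  refine ⟨ofDigitsWord i d, ofDigitsWord_mem_circleWords i d, ?_⟩
  rw [circleMap, binaryDigits_ofDigitsWord]
  rfl

end Hexacarpet

/-- the subset
`C = π({w ∈ Σ : w₂ ∈ {2,3},  w_k ∈ {0,1} for all k ≥ 3})` of `K` is homeomorphic to
the circle. (In 0-indexed form, `w₂ = w 1` and the condition `k ≥ 3` reads `k ≥ 2`.) -/
theorem stmt13 :
    Nonempty
      ((piK '' {w : Word | (w 1 = 2 ∨ w 1 = 3) ∧ ∀ k, 2 ≤ k → (w k = 0 ∨ w k = 1)} :
        Set Hexacarpet) ≃ₜ Circle) := by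
  refine Quotient.nonempty_homeomorph_image_mk Hexacarpet.isClosed_circleWords ?_
    Hexacarpet.continuous_circleMap ?_ Hexacarpet.surjOn_circleMap
  · exact fun _ _ h => (Hexacarpet.mem_circleWords_iff_and_circleMap_eq_of_eqvGen h).1.mp
  · exact fun _ hu _ hw =>
      ⟨fun h => (Hexacarpet.mem_circleWords_iff_and_circleMap_eq_of_eqvGen h).2 hu,
        Hexacarpet.eqvGen_tilde_of_circleMap_eq hu hw⟩
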